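/- For ω = 1, the generating function Y_1(z,x) = Σ_{Ω^1-trees t, |t|≥2} z^{|t|} x^{l(t)}/|t|! satisfies the ODE dY_1/dz = xz + x²z²/2 + Y_1·(1 + xz), Y_1(0,x)=0. -/

import Mathlib

/-!
Common definitions: plane (ordered) labeled binary trees, the flip relation
generating the "unordered" identification, ranked trees, Ω-trees, and counts.
-/

/-- Plane rooted binary trees whose internal nodes carry a label. -/
inductive PTree : Type where
  | leaf : PTree
  | node : ℕ → PTree → PTree → PTree
deriving DecidableEq

namespace PTree

/-- Size: the number of internal nodes. -/
def size : PTree → ℕ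
  | leaf => 0
  | node _ l r => l.size + r.size + 1

/-- Number of cherries: internal nodes whose two children are leaves. -/
def cherries : PTree → ℕ
  | leaf => 0
  | node _ leaf leaf => 1
  | node _ l r => l.cherries + r.cherries

/-- Multiset of labels of internal nodes. -/
def labels : PTree → Multiset ℕ
  | leaf => 0
  | node k l r => k ::ₘ (l.labels + r.labels)

/-- Labels increase away from the root: each internal node's label is smaller
than all labels in its subtrees. -/
def Incr : PTree → Prop
  | leaf => True
  | node k l r =>
      (∀ m ∈ l.labels, k < m) ∧ (∀ m ∈ r.labels, k < m) ∧ Incr l ∧ Incr r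

/-- A ranked tree of size `n`: labels increase from the root and the internal
labels are exactly `{1, …, n}` (each occurring once). -/
def IsRanked (n : ℕ) (t : PTree) : Prop :=
  t.Incr ∧ t.labels = (Finset.Icc 1 n).val

/-- The Ω-condition: at every internal node, the smaller of the two child
subtrees has at most `ω` internal nodes. -/
def OmegaOK (ω : ℕ) : PTree → Prop
  | leaf => True
  | node _ l r => min l.size r.size ≤ ω ∧ OmegaOK ω l ∧ OmegaOK ω r

/-- One-step flip: swap the two children of some internal node. -/
inductive Flip : PTree → PTree → Prop
  | swap (k : ℕ) (l r : PTree) : Flip (node k l r) (node k r l)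
  | congL {l l' : PTree} (k : ℕ) (r : PTree) : Flip l l' → Flip (node k l r) (node k l' r)
  | congR {r r' : PTree} (k : ℕ) (l : PTree) : Flip r r' → Flip (node k l r) (node k l r')

end PTree

/-- Setoid on trees satisfying `P`, identifying trees up to swapping children
(so that left/right order is immaterial). -/
def treeSetoid (P : PTree → Prop) : Setoid {t : PTree // P t} :=
  Relation.EqvGen.setoid (fun a b => PTree.Flip a.1 b.1)

/-- `|R_n|` : the number of ranked trees (histories) of size `n`. -/
noncomputable def rankedCount (n : ℕ) : ℕ :=
  Nat.card (Quotient (treeSetoid (PTree.IsRanked n)))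

/-- `e_{n,l}` : the number of ranked trees of size `n` with `l` cherries. -/
noncomputable def rankedCountC (n l : ℕ) : ℕ :=
  Nat.card (Quotient (treeSetoid (fun t => PTree.IsRanked n t ∧ t.cherries = l)))

/-- `|Ω^ω_n|` : the number of Ω^ω-trees of size `n`. -/
noncomputable def omegaCount (ω n : ℕ) : ℕ :=
  Nat.card (Quotient (treeSetoid (fun t => PTree.IsRanked n t ∧ PTree.OmegaOK ω t)))

/-- `|Ω^ω_{n,l}|` : the number of Ω^ω-trees of size `n` with `l` cherries. -/
noncomputable def omegaCountC (ω n l : ℕ) : ℕ :=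
  Nat.card (Quotient (treeSetoid
    (fun t => PTree.IsRanked n t ∧ PTree.OmegaOK ω t ∧ t.cherries = l)))

open PowerSeries Polynomial

/-- `Y_1(z,x) = ∑_{Ω¹-trees t, |t| ≥ 2} z^{|t|} x^{l(t)}/|t|!`. -/
noncomputable def Y1gf : PowerSeries (Polynomial ℚ) :=
  PowerSeries.mk fun n =>
    if 2 ≤ n then
      ∑ l ∈ Finset.range (n + 1),
        Polynomial.C ((omegaCountC 1 n l : ℚ) / (n.factorial : ℚ)) * Polynomial.X ^ l
    else 0

/-!
Flip classes are counted through canonical representatives, in which the children of every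
node are sorted by (size, root label). In a canonical Ω¹-tree with label set `s` and root
`a = min s` the left child is then a leaf or a cherry `j`, and deleting the root (and the
cherry) leaves a canonical Ω¹-tree on `s \ {a}` (resp. `s \ {a, j}`). For `|s| ≥ 4` this is
a bijection, and since the counts only depend on `|s|`, it gives
`|Ω¹_{n+2,l+1}| = |Ω¹_{n+1,l+1}| + (n+1) |Ω¹_{n,l}|` for `n ≥ 2`. Divided by `(n+2)!` this
is `(n+2) y_{n+2} = y_{n+1} + x y_n` for the coefficients `y_n` of `Y_1`, which together with
`y_2 = x/2` and `y_3 = (x + x²)/6` is the ODE read off coefficientwise.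
-/

namespace PTree

theorem card_labels (t : PTree) : Multiset.card t.labels = t.size := by
  induction t with
  | leaf => rfl
  | node k l r ihl ihr => simp [labels, size, ihl, ihr, add_comm]

theorem eq_leaf_of_size_eq_zero {t : PTree} (h : t.size = 0) : t = leaf := by
  cases t with
  | leaf => rfl
  | node => simp [size] at h

theorem exists_eq_cherry_of_size_eq_one {t : PTree} (h : t.size = 1) :
    ∃ j, t = node j leaf leaf := by
  cases t with
  | leaf => simp [size] at h
  | node k l r =>
    obtain rfl := eq_leaf_of_size_eq_zero (t := l) (by simp only [size] at h; omega)
    obtain rfl := eq_leaf_of_size_eq_zero (t := r) (by simp only [size] at h; omega)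
    exact ⟨k, rfl⟩

theorem cherries_node {k : ℕ} {l r : PTree} (h : ¬(l = leaf ∧ r = leaf)) :
    cherries (node k l r) = cherries l + cherries r := by
  cases l <;> cases r <;> simp_all [cherries]

theorem cherries_pos {t : PTree} (h : t ≠ leaf) : 0 < t.cherries := by
  induction t with
  | leaf => exact absurd rfl h
  | node k l r ihl ihr =>
    by_cases hlr : l = leaf ∧ r = leaf
    · obtain ⟨rfl, rfl⟩ := hlr; simp [cherries]
    · rw [cherries_node hlr]
      rcases not_and_or.mp hlr with hl | hr
      · have := ihl hl; omega
      · have := ihr hr; omega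

theorem cherries_le_size (t : PTree) : t.cherries ≤ t.size := by
  induction t with
  | leaf => simp [cherries, size]
  | node k l r ihl ihr =>
    by_cases hlr : l = leaf ∧ r = leaf
    · obtain ⟨rfl, rfl⟩ := hlr; simp [cherries, size]
    · rw [cherries_node hlr, size]; omega

theorem Incr.root_le {k m : ℕ} {l r : PTree} (h : Incr (node k l r))
    (hm : m ∈ (node k l r).labels) : k ≤ m := by
  simp only [labels, Multiset.mem_cons, Multiset.mem_add] at hm
  rcases hm with rfl | hm | hm
  exacts [le_rfl, (h.1 m hm).le, (h.2.1 m hm).le]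

def rootLabel : PTree → ℕ
  | leaf => 0
  | node k _ _ => k

theorem rootLabel_mem_labels {t : PTree} (h : t ≠ leaf) : t.rootLabel ∈ t.labels := by
  cases t with
  | leaf => exact absurd rfl h
  | node => simp [rootLabel, labels]

namespace Flip

variable {a b : PTree}

theorem labels_eq (h : Flip a b) : a.labels = b.labels := by
  induction h with
  | swap => simp [labels, add_comm]
  | congL _ _ _ ih | congR _ _ _ ih => simp [labels, ih]

theorem size_eq (h : Flip a b) : a.size = b.size := by
  induction h with
  | swap => simp only [size]; omega
  | congL _ _ _ ih | congR _ _ _ ih => simp [size, ih]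

theorem rootLabel_eq (h : Flip a b) : a.rootLabel = b.rootLabel := by
  cases h <;> rfl

theorem ne_leaf (h : Flip a b) : a ≠ leaf ∧ b ≠ leaf := by
  cases h <;> simp

theorem cherries_eq (h : Flip a b) : a.cherries = b.cherries := by
  induction h with
  | swap k l r => cases l <;> cases r <;> simp [cherries, add_comm]
  | congL _ _ h ih | congR _ _ h ih =>
    rw [cherries_node (by simp [h.ne_leaf.1]), cherries_node (by simp [h.ne_leaf.2]), ih]

theorem incr_iff (h : Flip a b) : a.Incr ↔ b.Incr := by
  induction h with
  | swap => simp only [Incr]; tauto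
  | congL _ _ h ih | congR _ _ h ih => simp [Incr, ih, h.labels_eq]

theorem omegaOK_iff (h : Flip a b) (ω : ℕ) : OmegaOK ω a ↔ OmegaOK ω b := by
  induction h with
  | swap => simp only [OmegaOK, min_comm]; tauto
  | congL _ _ h ih | congR _ _ h ih => simp [OmegaOK, ih, h.size_eq]

end Flip

/-- Children are sorted by size, ties broken by root label; in a tree with distinct labels
only two leaves can tie. -/
def key (t : PTree) : ℕ ×ₗ ℕ := toLex (t.size, t.rootLabel)

def Canon : PTree → Prop
  | leaf => True
  | node _ l r => key l ≤ key r ∧ Canon l ∧ Canon r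

def canonicalize : PTree → PTree
  | leaf => leaf
  | node k l r =>
    if key l ≤ key r then node k (canonicalize l) (canonicalize r)
    else node k (canonicalize r) (canonicalize l)

theorem size_le_size_of_key_le {l r : PTree} (h : key l ≤ key r) : l.size ≤ r.size :=
  (Prod.Lex.toLex_le_toLex'.mp h).1

theorem key_le_key_of_size_lt {l r : PTree} (h : l.size < r.size) : key l ≤ key r :=
  Prod.Lex.toLex_le_toLex.mpr (.inl h)

theorem key_leaf_le (t : PTree) : key leaf ≤ key t :=
  Prod.Lex.toLex_le_toLex'.mpr ⟨Nat.zero_le _, fun _ => Nat.zero_le _⟩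

theorem Flip.key_eq {a b : PTree} (h : Flip a b) : key a = key b := by
  rw [key, key, h.size_eq, h.rootLabel_eq]

theorem eq_leaf_of_key_eq {l r : PTree} (hd : Disjoint l.labels r.labels) (h : key l = key r) :
    l = leaf := by
  rcases eq_or_ne l leaf with hl | hl
  · exact hl
  have hsize : l.size = r.size := congrArg (·.1) h
  have hr : r ≠ leaf := by
    rintro rfl
    exact hl (eq_leaf_of_size_eq_zero hsize)
  have hroot : l.rootLabel = r.rootLabel := congrArg (·.2) h
  exact absurd (hroot ▸ rootLabel_mem_labels hr)
    (Multiset.disjoint_left.mp hd (rootLabel_mem_labels hl))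

theorem size_canonicalize (t : PTree) : (canonicalize t).size = t.size := by
  induction t with
  | leaf => rfl
  | node k l r ihl ihr =>
    simp only [canonicalize]
    split
    · simp only [size, ihl, ihr]
    · simp only [size, ihl, ihr]; omega

theorem rootLabel_canonicalize (t : PTree) : (canonicalize t).rootLabel = t.rootLabel := by
  cases t with
  | leaf => rfl
  | node k l r => simp only [canonicalize]; split <;> rfl

theorem key_canonicalize (t : PTree) : key (canonicalize t) = key t := by
  rw [key, key, size_canonicalize, rootLabel_canonicalize]

theorem canon_canonicalize (t : PTree) : Canon (canonicalize t) := by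
  induction t with
  | leaf => trivial
  | node k l r ihl ihr =>
    simp only [canonicalize]
    split_ifs with h
    · exact ⟨by rwa [key_canonicalize, key_canonicalize], ihl, ihr⟩
    · exact ⟨by rw [key_canonicalize, key_canonicalize]; exact (lt_of_not_ge h).le, ihr, ihl⟩

theorem canonicalize_eq_self {t : PTree} (h : Canon t) : canonicalize t = t := by
  induction t with
  | leaf => rfl
  | node k l r ihl ihr => rw [canonicalize, if_pos h.1, ihl h.2.1, ihr h.2.2]

theorem Flip.canonicalize_eq {a b : PTree} (h : Flip a b) (hnd : a.labels.Nodup) :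
    canonicalize a = canonicalize b := by
  induction h with
  | swap k l r =>
    simp only [labels, Multiset.nodup_cons, Multiset.nodup_add] at hnd
    have hd := hnd.2.2.2
    rcases lt_trichotomy (key l) (key r) with hlt | heq | hgt
    · simp [canonicalize, hlt.le, not_le.mpr hlt]
    · obtain rfl := eq_leaf_of_key_eq hd heq
      obtain rfl := (eq_leaf_of_key_eq hd.symm heq.symm)
      rfl
    · simp [canonicalize, hgt.le, not_le.mpr hgt]
  | congL k r h ih =>
    simp only [labels, Multiset.nodup_cons, Multiset.nodup_add] at hnd
    rw [canonicalize, canonicalize, h.key_eq, ih hnd.2.1]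
  | congR k l h ih =>
    simp only [labels, Multiset.nodup_cons, Multiset.nodup_add] at hnd
    rw [canonicalize, canonicalize, h.key_eq, ih hnd.2.2.1]

theorem reflTransGen_flip_canonicalize (t : PTree) :
    Relation.ReflTransGen Flip t (canonicalize t) := by
  induction t with
  | leaf => rfl
  | node k l r ihl ihr =>
    have hchildren :
        Relation.ReflTransGen Flip (node k l r) (node k (canonicalize l) (canonicalize r)) :=
      (ihl.lift (node k · r) fun _ _ => Flip.congL k r).trans
        (ihr.lift (node k (canonicalize l) ·) fun _ _ => Flip.congR k _)
    rw [canonicalize]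
    split
    · exact hchildren
    · exact hchildren.tail (Flip.swap k _ _)

theorem card_quotient_treeSetoid {P : PTree → Prop} (hP : ∀ a b, Flip a b → P a → P b)
    (hnodup : ∀ t, P t → t.labels.Nodup) :
    Nat.card (Quotient (treeSetoid P)) = Nat.card {t // P t ∧ Canon t} := by
  let := treeSetoid P
  have hreach : ∀ {a b : PTree} (ha : P a), Relation.ReflTransGen Flip a b →
      ∃ hb : P b, treeSetoid P ⟨a, ha⟩ ⟨b, hb⟩ := by
    intro a b ha h
    induction h with
    | refl => exact ⟨ha, Setoid.refl _⟩
    | tail _ hcb ih =>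
      obtain ⟨hc, hac⟩ := ih
      exact ⟨hP _ _ hcb hc, Setoid.trans hac (Relation.EqvGen.rel _ _ hcb)⟩
  symm
  refine Nat.card_eq_of_bijective (fun t => ⟦⟨t.1, t.2.1⟩⟧) ⟨?_, ?_⟩
  · intro a b hab
    have hker : treeSetoid P ≤ Setoid.ker (canonicalize ∘ Subtype.val) :=
      Setoid.eqvGen_le fun x y hxy => hxy.canonicalize_eq (hnodup _ x.2)
    have := hker (Quotient.exact hab)
    simp only [Setoid.ker_def, Function.comp_apply, canonicalize_eq_self a.2.2,
      canonicalize_eq_self b.2.2] at this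
    exact Subtype.ext this
  · refine Quotient.ind fun a => ?_
    obtain ⟨hn, ha⟩ := hreach a.2 (reflTransGen_flip_canonicalize a.1)
    exact ⟨⟨canonicalize a.1, hn, canon_canonicalize _⟩, Quotient.sound (Setoid.symm ha)⟩

def relabel (f : ℕ → ℕ) : PTree → PTree
  | leaf => leaf
  | node k l r => node (f k) (relabel f l) (relabel f r)

section Relabel

variable {f g : ℕ → ℕ} {t : PTree}

@[simp] theorem relabel_eq_leaf_iff : relabel f t = leaf ↔ t = leaf := by
  cases t <;> simp [relabel]

@[simp] theorem size_relabel : (relabel f t).size = t.size := by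
  induction t <;> simp_all [relabel, size]

@[simp] theorem labels_relabel : (relabel f t).labels = t.labels.map f := by
  induction t <;> simp_all [relabel, labels]

@[simp] theorem cherries_relabel : (relabel f t).cherries = t.cherries := by
  induction t with
  | leaf => rfl
  | node k l r ihl ihr =>
    by_cases hlr : l = leaf ∧ r = leaf
    · obtain ⟨rfl, rfl⟩ := hlr; rfl
    · rw [relabel, cherries_node (by simpa using hlr), cherries_node hlr, ihl, ihr]

theorem omegaOK_relabel {ω : ℕ} (h : OmegaOK ω t) : OmegaOK ω (relabel f t) := by
  induction t with
  | leaf => trivial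
  | node k l r ihl ihr => exact ⟨by simpa using h.1, ihl h.2.1, ihr h.2.2⟩

theorem relabel_relabel_of_leftInverse (h : ∀ k ∈ t.labels, g (f k) = k) :
    relabel g (relabel f t) = t := by
  induction t with
  | leaf => rfl
  | node k l r ihl ihr =>
    simp only [labels, Multiset.mem_cons, Multiset.mem_add] at h
    rw [relabel, relabel, h k (.inl rfl), ihl fun m hm => h m (.inr (.inl hm)),
      ihr fun m hm => h m (.inr (.inr hm))]

abbrev labelSet (t : PTree) : Set ℕ := {m | m ∈ t.labels}

theorem labelSet_node_left {k : ℕ} {l r : PTree} : l.labelSet ⊆ (node k l r).labelSet :=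
  fun _ hm => Multiset.mem_cons_of_mem (Multiset.mem_add.mpr (.inl hm))

theorem labelSet_node_right {k : ℕ} {l r : PTree} : r.labelSet ⊆ (node k l r).labelSet :=
  fun _ hm => Multiset.mem_cons_of_mem (Multiset.mem_add.mpr (.inr hm))

theorem incr_relabel (hf : StrictMonoOn f t.labelSet) (h : t.Incr) : (relabel f t).Incr := by
  induction t with
  | leaf => trivial
  | node k l r ihl ihr =>
    have hk : k ∈ (node k l r).labelSet := by simp [labels]
    refine ⟨?_, ?_, ihl (hf.mono labelSet_node_left) h.2.2.1,
      ihr (hf.mono labelSet_node_right) h.2.2.2⟩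
    all_goals
      simp only [labels_relabel, Multiset.mem_map, forall_exists_index, and_imp]
      rintro _ m hm rfl
    · exact hf hk (labelSet_node_left hm) (h.1 m hm)
    · exact hf hk (labelSet_node_right hm) (h.2.1 m hm)

theorem key_relabel_le_key_relabel {l r : PTree}
    (hf : StrictMonoOn f (l.labelSet ∪ r.labelSet)) (h : key l ≤ key r) :
    key (relabel f l) ≤ key (relabel f r) := by
  simp only [key, Prod.Lex.toLex_le_toLex, size_relabel] at h ⊢
  rcases h with h | ⟨hsize, hroot⟩
  · exact .inl h
  refine .inr ⟨hsize, ?_⟩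
  cases l with
  | leaf => exact Nat.zero_le _
  | node kl _ _ =>
    cases r with
    | leaf => simp [size] at hsize
    | node kr _ _ =>
      exact hf.monotoneOn (.inl (by simp [labels])) (.inr (by simp [labels])) hroot

theorem canon_relabel (hf : StrictMonoOn f t.labelSet) (h : t.Canon) : (relabel f t).Canon := by
  induction t with
  | leaf => trivial
  | node k l r ihl ihr =>
    exact ⟨key_relabel_le_key_relabel (hf.mono (Set.union_subset labelSet_node_left
      labelSet_node_right)) h.1, ihl (hf.mono labelSet_node_left) h.2.1,
      ihr (hf.mono labelSet_node_right) h.2.2⟩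

end Relabel

/-- Canonical representatives of the flip classes of Ω¹-trees with label set `s` and `l`
cherries. -/
def canonTrees (s : Finset ℕ) (l : ℕ) : Set PTree :=
  {t | t.Incr ∧ t.labels = s.val ∧ OmegaOK 1 t ∧ t.cherries = l ∧ t.Canon}

theorem size_eq_card {t : PTree} {s : Finset ℕ} (h : t.labels = s.val) : t.size = s.card := by
  rw [← card_labels, h, Finset.card_val]

theorem finite_setOf_size_le (s : Finset ℕ) (m : ℕ) :
    {t : PTree | t.size ≤ m ∧ ∀ k ∈ t.labels, k ∈ s}.Finite := by
  induction m with
  | zero =>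
    refine (Set.finite_singleton leaf).subset fun t ht => ?_
    exact eq_leaf_of_size_eq_zero (Nat.le_zero.mp ht.1)
  | succ m ih =>
    refine ((Set.finite_singleton leaf).union
      ((s.finite_toSet.prod (ih.prod ih)).image fun p => node p.1 p.2.1 p.2.2)).subset ?_
    rintro (_ | ⟨k, l, r⟩) ⟨hsize, hlabels⟩
    · exact .inl rfl
    simp only [size] at hsize
    simp only [labels, Multiset.mem_cons, Multiset.mem_add] at hlabels
    exact .inr ⟨(k, l, r), ⟨hlabels k (.inl rfl),
      ⟨show l.size ≤ m by omega, fun m hm => hlabels m (.inr (.inl hm))⟩,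
      ⟨show r.size ≤ m by omega, fun m hm => hlabels m (.inr (.inr hm))⟩⟩, rfl⟩

theorem finite_canonTrees (s : Finset ℕ) (l : ℕ) : (canonTrees s l).Finite :=
  (finite_setOf_size_le s s.card).subset fun _ ht =>
    ⟨(size_eq_card ht.2.1).le, fun k hk => by rwa [ht.2.1, Finset.mem_val] at hk⟩

instance (s : Finset ℕ) (l : ℕ) : Finite (canonTrees s l) := (finite_canonTrees s l).to_subtype

theorem relabel_mem_canonTrees {s : Finset ℕ} {l : ℕ} {f : ℕ → ℕ} {t : PTree}
    (hf : StrictMonoOn f s) (ht : t ∈ canonTrees s l) :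
    relabel f t ∈ canonTrees (s.image f) l := by
  obtain ⟨hincr, hlabels, homega, hcherries, hcanon⟩ := ht
  have hf' : StrictMonoOn f t.labelSet := by
    simpa [labelSet, hlabels] using hf
  refine ⟨incr_relabel hf' hincr, ?_, omegaOK_relabel homega, by rwa [cherries_relabel],
    canon_relabel hf' hcanon⟩
  rw [labels_relabel, hlabels, Finset.image_val_of_injOn hf.injOn]

def extendOrderIso {s s' : Finset ℕ} (e : s ≃o s') (k : ℕ) : ℕ :=
  if hk : k ∈ s then e ⟨k, hk⟩ else k

section extendOrderIso

variable {s s' : Finset ℕ} (e : s ≃o s')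

theorem extendOrderIso_of_mem {k : ℕ} (hk : k ∈ s) : extendOrderIso e k = e ⟨k, hk⟩ :=
  dif_pos hk

theorem strictMonoOn_extendOrderIso : StrictMonoOn (extendOrderIso e) s :=
  fun a ha b hb hab => by
    rw [extendOrderIso_of_mem e ha, extendOrderIso_of_mem e hb]
    exact e.strictMono (Subtype.mk_lt_mk.mpr hab)

theorem image_extendOrderIso : s.image (extendOrderIso e) = s' := by
  ext m
  simp only [Finset.mem_image]
  constructor
  · rintro ⟨k, hk, rfl⟩
    rw [extendOrderIso_of_mem e hk]
    exact (e ⟨k, hk⟩).2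
  · intro hm
    refine ⟨e.symm ⟨m, hm⟩, (e.symm ⟨m, hm⟩).2, ?_⟩
    rw [extendOrderIso_of_mem e (e.symm ⟨m, hm⟩).2]
    simp

theorem extendOrderIso_symm_extendOrderIso {k : ℕ} (hk : k ∈ s) :
    extendOrderIso e.symm (extendOrderIso e k) = k := by
  rw [extendOrderIso_of_mem e hk, extendOrderIso_of_mem e.symm (e ⟨k, hk⟩).2]
  simp

end extendOrderIso

theorem card_canonTrees_congr {s s' : Finset ℕ} (h : s.card = s'.card) (l : ℕ) :
    Nat.card (canonTrees s l) = Nat.card (canonTrees s' l) := by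
  let e : s ≃o s' := (s.orderIsoOfFin h).symm.trans (s'.orderIsoOfFin rfl)
  have hinv : ∀ {s s' : Finset ℕ} (e : s ≃o s') (t : canonTrees s l),
      relabel (extendOrderIso e.symm) (relabel (extendOrderIso e) t) = t := fun e t =>
    relabel_relabel_of_leftInverse fun k hk =>
      extendOrderIso_symm_extendOrderIso e (by rwa [t.2.2.1, Finset.mem_val] at hk)
  have hmaps : ∀ {s s' : Finset ℕ} (e : s ≃o s') (t : canonTrees s l),
      relabel (extendOrderIso e) t ∈ canonTrees s' l := fun e t =>
    by simpa only [image_extendOrderIso] using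
      relabel_mem_canonTrees (strictMonoOn_extendOrderIso e) t.2
  exact Nat.card_congr
    { toFun t := ⟨_, hmaps e t⟩
      invFun t := ⟨_, hmaps e.symm t⟩
      left_inv t := Subtype.ext (hinv e t)
      right_inv t := Subtype.ext (hinv e.symm t) }

section RootDecomposition

variable {a : ℕ} {s : Finset ℕ} {l : ℕ}

theorem node_mem_canonTrees_insert_iff (ha : ∀ b ∈ s, a < b) {X Y : PTree} :
    node a X Y ∈ canonTrees (insert a s) l ↔
      (X.Incr ∧ Y.Incr ∧ X.labels + Y.labels = s.val) ∧
        OmegaOK 1 (node a X Y) ∧ (node a X Y).cherries = l ∧ (node a X Y).Canon := by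
  have hlabels : (node a X Y).labels = (insert a s).val ↔ X.labels + Y.labels = s.val := by
    rw [Finset.insert_val_of_notMem fun h => (ha a h).false, labels, Multiset.cons_inj_right]
  simp only [canonTrees, Set.mem_ofPred_eq, hlabels, Incr]
  constructor
  · rintro ⟨⟨-, -, hX, hY⟩, hXY, rest⟩
    exact ⟨⟨hX, hY, hXY⟩, rest⟩
  · rintro ⟨⟨hX, hY, hXY⟩, rest⟩
    have hmem : ∀ m, m ∈ X.labels ∨ m ∈ Y.labels → a < m := fun m hm =>
      ha m (by rw [← Finset.mem_val, ← hXY, Multiset.mem_add]; exact hm)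
    exact ⟨⟨fun m hm => hmem m (.inl hm), fun m hm => hmem m (.inr hm), hX, hY⟩, hXY, rest⟩

/-- Since children are sorted by size, the Ω¹-condition at the root forces the left child to
be a leaf or a cherry. -/
theorem eq_node_of_mem_canonTrees_insert (ha : ∀ b ∈ s, a < b) {t : PTree}
    (ht : t ∈ canonTrees (insert a s) l) :
    (∃ Y, t = node a leaf Y) ∨ ∃ j ∈ s, ∃ Y, t = node a (node j leaf leaf) Y := by
  obtain ⟨hincr, hlabels, homega, -, hcanon⟩ := ht
  cases t with
  | leaf => exact absurd (size_eq_card hlabels) (Finset.insert_nonempty a s).card_pos.ne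
  | node k X Y =>
    have hk : k = a := by
      have hka := hincr.root_le (m := a) (by simp [hlabels])
      have hk : k ∈ insert a s := by simp [← Finset.mem_val, ← hlabels, labels]
      rcases Finset.mem_insert.mp hk with hk | hk
      exacts [hk, absurd hka (not_le.mpr (ha k hk))]
    subst hk
    have hXY : X.labels + Y.labels = s.val :=
      ((node_mem_canonTrees_insert_iff ha).mp ⟨hincr, hlabels, homega, rfl, hcanon⟩).1.2.2
    have hsize : X.size ≤ 1 := by
      have := size_le_size_of_key_le hcanon.1
      have := homega.1
      omega
    rcases Nat.le_one_iff_eq_zero_or_eq_one.mp hsize with h0 | h1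
    · exact .inl ⟨Y, by rw [eq_leaf_of_size_eq_zero h0]⟩
    · obtain ⟨j, rfl⟩ := exists_eq_cherry_of_size_eq_one h1
      refine .inr ⟨j, ?_, Y, rfl⟩
      simp [← Finset.mem_val, ← hXY, labels]

theorem node_leaf_mem_canonTrees_insert_iff (ha : ∀ b ∈ s, a < b) (hs : s.Nonempty)
    {Y : PTree} : node a leaf Y ∈ canonTrees (insert a s) l ↔ Y ∈ canonTrees s l := by
  have hY : ∀ {Y : PTree}, Y.labels = s.val → ¬(leaf = leaf ∧ Y = leaf) := by
    rintro _ hlabels ⟨-, rfl⟩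
    exact hs.ne_empty (Finset.val_eq_zero.mp hlabels.symm)
  simp only [node_mem_canonTrees_insert_iff ha, labels, zero_add, Incr, OmegaOK, Canon, size,
    Nat.zero_min, zero_le, key_leaf_le, true_and]
  constructor
  · rintro ⟨⟨hincr, hlabels⟩, homega, hcherries, hcanon⟩
    rw [cherries_node (hY hlabels), cherries, zero_add] at hcherries
    exact ⟨hincr, hlabels, homega, hcherries, hcanon⟩
  · rintro ⟨hincr, hlabels, homega, hcherries, hcanon⟩
    rw [cherries_node (hY hlabels), cherries, zero_add]
    exact ⟨⟨hincr, hlabels⟩, homega, hcherries, hcanon⟩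

theorem node_cherry_mem_canonTrees_insert_iff (ha : ∀ b ∈ s, a < b) {j : ℕ} (hj : j ∈ s)
    {Y : PTree} : node a (node j leaf leaf) Y ∈ canonTrees (insert a s) (l + 1) ↔
      Y ∈ canonTrees (s.erase j) l ∧ key (node j leaf leaf) ≤ key Y := by
  have hlabels : (node j leaf leaf).labels + Y.labels = s.val ↔ Y.labels = (s.erase j).val := by
    rw [← Multiset.cons_erase (Finset.mem_val.mpr hj), Finset.erase_val, labels, labels,
      add_zero, Multiset.cons_add, zero_add, Multiset.cons_inj_right]
  have hY : key (node j leaf leaf) ≤ key Y → ¬(node j leaf leaf = leaf ∧ Y = leaf) := by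
    rintro hkey ⟨-, rfl⟩
    simpa [size] using size_le_size_of_key_le hkey
  rw [node_mem_canonTrees_insert_iff ha, hlabels]
  constructor
  · rintro ⟨⟨-, hincr, hlabels⟩, ⟨-, -, homega⟩, hcherries, hkey, -, hcanon⟩
    rw [cherries_node (hY hkey), cherries] at hcherries
    exact ⟨⟨hincr, hlabels, homega, by omega, hcanon⟩, hkey⟩
  · rintro ⟨⟨hincr, hlabels, homega, hcherries, hcanon⟩, hkey⟩
    refine ⟨⟨by simp [Incr, labels], hincr, hlabels⟩,
      ⟨by simp [size], by simp [OmegaOK, size], homega⟩, ?_, hkey, by simp [Canon], hcanon⟩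
    rw [cherries_node (hY hkey), cherries, hcherries, add_comm]

end RootDecomposition

/-- With at least four labels the right child of the root has size at least two, so a cherry
child is always on the left and `glue` is a bijection. -/
theorem card_canonTrees_insert {a : ℕ} {s : Finset ℕ} (ha : ∀ b ∈ s, a < b)
    (hs : 3 ≤ s.card) (l : ℕ) : Nat.card (canonTrees (insert a s) (l + 1)) =
      Nat.card (canonTrees s (l + 1)) + ∑ j : s, Nat.card (canonTrees (s.erase j) l) := by
  have hs0 : s.Nonempty := Finset.card_pos.mp (by omega)
  have hkey : ∀ j ∈ s, ∀ Y ∈ canonTrees (s.erase j) l, key (node j leaf leaf) ≤ key Y :=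
    fun j hj Y hY => key_le_key_of_size_lt <| by
      rw [show (node j leaf leaf).size = 1 from rfl, size_eq_card hY.2.1,
        Finset.card_erase_of_mem hj]
      omega
  let glue : canonTrees s (l + 1) ⊕ (Σ j : s, canonTrees (s.erase j) l) →
      canonTrees (insert a s) (l + 1)
    | .inl Y => ⟨node a leaf Y, (node_leaf_mem_canonTrees_insert_iff ha hs0).mpr Y.2⟩
    | .inr ⟨j, Y⟩ => ⟨node a (node j leaf leaf) Y,
        (node_cherry_mem_canonTrees_insert_iff ha j.2).mpr ⟨Y.2, hkey j j.2 Y Y.2⟩⟩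
  have hglue : Function.Bijective glue := by
    refine ⟨?_, ?_⟩
    · rintro (Y | ⟨j, Y⟩) (Y' | ⟨j', Y'⟩) h <;>
        simp only [glue, Subtype.mk.injEq, node.injEq, reduceCtorEq, and_false, false_and,
          true_and, and_true] at h
      · exact congrArg Sum.inl (Subtype.ext h)
      · obtain ⟨hj, hY⟩ := h
        obtain rfl : j = j' := Subtype.ext hj
        exact congrArg Sum.inr (Sigma.ext rfl (heq_of_eq (Subtype.ext hY)))
    · rintro ⟨t, ht⟩
      rcases eq_node_of_mem_canonTrees_insert ha ht with ⟨Y, rfl⟩ | ⟨j, hj, Y, rfl⟩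
      · exact ⟨.inl ⟨Y, (node_leaf_mem_canonTrees_insert_iff ha hs0).mp ht⟩, rfl⟩
      · obtain ⟨hY, -⟩ := (node_cherry_mem_canonTrees_insert_iff ha hj).mp ht
        exact ⟨.inr ⟨⟨j, hj⟩, ⟨Y, hY⟩⟩, rfl⟩
  rw [← Nat.card_eq_of_bijective glue hglue, Nat.card_sum, Nat.card_sigma]

theorem cherries_pos_of_mem_canonTrees {s : Finset ℕ} {l : ℕ} (hs : s.Nonempty) {t : PTree}
    (ht : t ∈ canonTrees s l) : 0 < l := by
  rw [← ht.2.2.2.1]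
  refine cherries_pos fun h => hs.ne_empty ?_
  rw [← Finset.card_eq_zero, ← size_eq_card ht.2.1, h, size]

theorem mem_canonTrees_singleton {b l : ℕ} {t : PTree} :
    t ∈ canonTrees {b} l ↔ t = node b leaf leaf ∧ l = 1 := by
  constructor
  · rintro ⟨-, hlabels, -, hcherries, -⟩
    obtain ⟨j, rfl⟩ := exists_eq_cherry_of_size_eq_one (size_eq_card hlabels)
    simp only [labels, add_zero, Finset.singleton_val, Multiset.cons_zero,
      Multiset.singleton_inj] at hlabels
    exact ⟨by rw [hlabels], hcherries.symm⟩
  · rintro ⟨rfl, rfl⟩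
    simp [canonTrees, Incr, labels, OmegaOK, size, cherries, Canon]

theorem mem_canonTrees_pair {a b l : ℕ} (hab : a < b) {t : PTree} :
    t ∈ canonTrees {a, b} l ↔ t = node a leaf (node b leaf leaf) ∧ l = 1 := by
  have ha : ∀ c ∈ ({b} : Finset ℕ), a < c := by simpa using hab
  constructor
  · intro ht
    rcases eq_node_of_mem_canonTrees_insert ha ht with ⟨Y, rfl⟩ | ⟨j, hj, Y, rfl⟩
    · rw [node_leaf_mem_canonTrees_insert_iff ha (by simp), mem_canonTrees_singleton] at ht
      exact ⟨by rw [ht.1], ht.2⟩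
    · obtain ⟨l, rfl⟩ :=
        Nat.exists_eq_add_one.mpr (cherries_pos_of_mem_canonTrees (by simp) ht)
      obtain ⟨hY, hkey⟩ := (node_cherry_mem_canonTrees_insert_iff ha hj).mp ht
      rw [Finset.mem_singleton.mp hj, Finset.erase_singleton] at hY
      have := size_le_size_of_key_le hkey
      simp [size_eq_card hY.2.1, size] at this
  · rintro ⟨rfl, rfl⟩
    exact (node_leaf_mem_canonTrees_insert_iff ha (by simp)).mpr
      (mem_canonTrees_singleton.mpr ⟨rfl, rfl⟩)

theorem mem_canonTrees_triple {a b c l : ℕ} (hab : a < b) (hbc : b < c) {t : PTree} :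
    t ∈ canonTrees {a, b, c} l ↔
      t = node a leaf (node b leaf (node c leaf leaf)) ∧ l = 1 ∨
        t = node a (node b leaf leaf) (node c leaf leaf) ∧ l = 2 := by
  have ha : ∀ d ∈ ({b, c} : Finset ℕ), a < d := by
    intro d hd
    simp only [Finset.mem_insert, Finset.mem_singleton] at hd
    omega
  have hbc' : b ∉ ({c} : Finset ℕ) := by simpa using hbc.ne
  have hkey : key (node b leaf leaf) ≤ key (node c leaf leaf) :=
    Prod.Lex.toLex_le_toLex'.mpr ⟨le_rfl, fun _ => hbc.le⟩
  constructor
  · intro ht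
    rcases eq_node_of_mem_canonTrees_insert ha ht with ⟨Y, rfl⟩ | ⟨j, hj, Y, rfl⟩
    · rw [node_leaf_mem_canonTrees_insert_iff ha (by simp), mem_canonTrees_pair hbc] at ht
      exact .inl ⟨by rw [ht.1], ht.2⟩
    · obtain ⟨l, rfl⟩ :=
        Nat.exists_eq_add_one.mpr (cherries_pos_of_mem_canonTrees (by simp) ht)
      obtain ⟨hY, hkey⟩ := (node_cherry_mem_canonTrees_insert_iff ha hj).mp ht
      rcases Finset.mem_insert.mp hj with rfl | hj
      · rw [Finset.erase_insert hbc', mem_canonTrees_singleton] at hY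
        obtain ⟨rfl, rfl⟩ := hY
        exact .inr ⟨rfl, rfl⟩
      · obtain rfl := Finset.mem_singleton.mp hj
        rw [Finset.erase_insert_of_ne hbc.ne, Finset.erase_singleton, insert_empty_eq,
          mem_canonTrees_singleton] at hY
        obtain ⟨rfl, rfl⟩ := hY
        have := (Prod.Lex.toLex_le_toLex'.mp hkey).2 rfl
        simp only [rootLabel] at this
        omega
  · rintro (⟨rfl, rfl⟩ | ⟨rfl, rfl⟩)
    · exact (node_leaf_mem_canonTrees_insert_iff ha (by simp)).mpr
        ((mem_canonTrees_pair hbc).mpr ⟨rfl, rfl⟩)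
    · exact (node_cherry_mem_canonTrees_insert_iff ha (by simp)).mpr
        ⟨by simpa [Finset.erase_insert hbc'] using
          mem_canonTrees_singleton.mpr ⟨rfl, rfl⟩, hkey⟩

end PTree

open PTree

theorem omegaCountC_one_eq_card_canonTrees {s : Finset ℕ} {n : ℕ} (h : s.card = n) (l : ℕ) :
    omegaCountC 1 n l = Nat.card (canonTrees s l) := by
  rw [omegaCountC, card_quotient_treeSetoid,
    ← card_canonTrees_congr (s := Finset.Icc 1 n) (by simpa using h.symm)]
  · exact Nat.card_congr (Equiv.subtypeEquivRight fun t => by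
      simp only [IsRanked, canonTrees, Set.mem_ofPred_eq, and_assoc])
  · rintro a b hab ⟨⟨hincr, hlabels⟩, homega, hcherries⟩
    exact ⟨⟨hab.incr_iff.mp hincr, hab.labels_eq ▸ hlabels⟩, (hab.omegaOK_iff 1).mp homega,
      hab.cherries_eq ▸ hcherries⟩
  · rintro t ⟨⟨-, hlabels⟩, -⟩
    exact hlabels ▸ (Finset.Icc 1 n).nodup

theorem omegaCountC_one_add_two {n : ℕ} (hn : 2 ≤ n) (l : ℕ) :
    omegaCountC 1 (n + 2) (l + 1) =
      omegaCountC 1 (n + 1) (l + 1) + (n + 1) * omegaCountC 1 n l := by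
  set s := Finset.Icc 2 (n + 2)
  have ha : ∀ b ∈ s, 1 < b := fun b hb => (Finset.mem_Icc.mp hb).1
  have hs : s.card = n + 1 := by simp [s]
  rw [omegaCountC_one_eq_card_canonTrees (s := insert 1 s)
      (by rw [Finset.card_insert_of_notMem fun h => (ha 1 h).false, hs]),
    card_canonTrees_insert ha (by omega), ← omegaCountC_one_eq_card_canonTrees hs]
  congr 1
  rw [Finset.sum_congr rfl fun j _ => (omegaCountC_one_eq_card_canonTrees
      (by rw [Finset.card_erase_of_mem j.2, hs, Nat.add_sub_cancel]) l).symm]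
  simp [hs]

theorem omegaCountC_one_eq_zero_of_lt {n l : ℕ} (h : n < l) : omegaCountC 1 n l = 0 := by
  have : canonTrees (Finset.range n) l = ∅ := Set.eq_empty_of_forall_notMem fun t ht =>
    (cherries_le_size t).not_gt (by rwa [ht.2.2.2.1, size_eq_card ht.2.1, Finset.card_range])
  rw [omegaCountC_one_eq_card_canonTrees (Finset.card_range n), this, Nat.card_of_isEmpty]

theorem omegaCountC_one_zero {n : ℕ} (hn : 0 < n) : omegaCountC 1 n 0 = 0 := by
  have : canonTrees (Finset.range n) 0 = ∅ := Set.eq_empty_of_forall_notMem fun t ht =>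
    (cherries_pos_of_mem_canonTrees (by simpa using hn.ne') ht).false
  rw [omegaCountC_one_eq_card_canonTrees (Finset.card_range n), this, Nat.card_of_isEmpty]

noncomputable def cherryPoly (n : ℕ) : ℚ[X] :=
  ∑ l ∈ Finset.range (n + 1), Polynomial.C (omegaCountC 1 n l : ℚ) * Polynomial.X ^ l

theorem coeff_cherryPoly (n l : ℕ) : (cherryPoly n).coeff l = omegaCountC 1 n l := by
  simp only [cherryPoly, Polynomial.finsetSum_coeff, Polynomial.coeff_C_mul_X_pow,
    Finset.sum_ite_eq, Finset.mem_range]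
  split_ifs with h
  · rfl
  · rw [omegaCountC_one_eq_zero_of_lt (by omega), Nat.cast_zero]

theorem cherryPoly_two : cherryPoly 2 = Polynomial.X := by
  ext l
  rw [coeff_cherryPoly, omegaCountC_one_eq_card_canonTrees (s := {1, 2}) (n := 2) rfl,
    Polynomial.coeff_X]
  have h := fun t => mem_canonTrees_pair (t := t) (l := l) one_lt_two
  by_cases hl : l = 1
  · subst hl
    rw [Set.eq_singleton_iff_unique_mem.mpr
      ⟨(h _).mpr ⟨rfl, rfl⟩, fun t ht => ((h t).mp ht).1⟩]
    simp
  · rw [Set.eq_empty_of_forall_notMem fun t ht => hl ((h t).mp ht).2]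
    simp [Ne.symm hl]

theorem cherryPoly_three : cherryPoly 3 = Polynomial.X + Polynomial.X ^ 2 := by
  ext l
  rw [coeff_cherryPoly, omegaCountC_one_eq_card_canonTrees (s := {1, 2, 3}) (n := 3) rfl,
    Polynomial.coeff_add, Polynomial.coeff_X, Polynomial.coeff_X_pow]
  have h := fun t => mem_canonTrees_triple (t := t) (l := l) one_lt_two (by norm_num : 2 < 3)
  rcases l with _ | _ | _ | l
  · rw [Set.eq_empty_of_forall_notMem (s := canonTrees _ _)
      fun t ht => by simpa using (h t).mp ht]
    simp
  · rw [Set.eq_singleton_iff_unique_mem.mpr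
      ⟨(h _).mpr (.inl ⟨rfl, rfl⟩), fun t ht => by simpa using (h t).mp ht⟩]
    simp
  · rw [Set.eq_singleton_iff_unique_mem.mpr
      ⟨(h _).mpr (.inr ⟨rfl, rfl⟩), fun t ht => by simpa using (h t).mp ht⟩]
    simp
  · rw [Set.eq_empty_of_forall_notMem (s := canonTrees _ _)
      fun t ht => by simpa using (h t).mp ht]
    simp

theorem cherryPoly_add_two {n : ℕ} (hn : 2 ≤ n) :
    cherryPoly (n + 2) =
      cherryPoly (n + 1) + Polynomial.C ((n : ℚ) + 1) * Polynomial.X * cherryPoly n := by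
  ext (_ | l)
  · simp [coeff_cherryPoly, omegaCountC_one_zero]
  · simp only [coeff_cherryPoly, Polynomial.coeff_add, mul_assoc, Polynomial.coeff_C_mul,
      Polynomial.coeff_X_mul, omegaCountC_one_add_two hn]
    push_cast
    ring

theorem coeff_Y1gf {n : ℕ} (hn : 2 ≤ n) :
    coeff n Y1gf = Polynomial.C ((n.factorial : ℚ)⁻¹) * cherryPoly n := by
  rw [Y1gf, coeff_mk, if_pos hn, cherryPoly, Finset.mul_sum]
  refine Finset.sum_congr rfl fun l _ => ?_
  rw [← mul_assoc, ← Polynomial.C_mul, div_eq_inv_mul]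

theorem coeff_Y1gf_of_lt_two {n : ℕ} (hn : n < 2) : coeff n Y1gf = 0 := by
  rw [Y1gf, coeff_mk, if_neg (by omega)]

theorem coeff_Y1gf_add_two {n : ℕ} (hn : 2 ≤ n) :
    coeff (n + 2) Y1gf * (((n + 1 : ℕ) : ℚ[X]) + 1) =
      coeff (n + 1) Y1gf + Polynomial.X * coeff n Y1gf := by
  rw [coeff_Y1gf hn, coeff_Y1gf (by omega), coeff_Y1gf (by omega), cherryPoly_add_two hn]
  have hfac : ((n + 2).factorial : ℚ) = (n + 2) * (n + 1) * n.factorial := by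
    push_cast [Nat.factorial_succ]
    ring
  have hn0 : (n.factorial : ℚ) ≠ 0 := by positivity
  have hcast : (((n + 1 : ℕ) : ℚ[X]) + 1) = Polynomial.C ((n : ℚ) + 2) := by
    simp only [map_add, map_natCast, Polynomial.C_ofNat, Nat.cast_add, Nat.cast_one]
    ring
  have h1 : Polynomial.C ((n + 2).factorial : ℚ)⁻¹ * Polynomial.C ((n : ℚ) + 2) =
      Polynomial.C ((n + 1).factorial : ℚ)⁻¹ := by
    rw [← Polynomial.C_mul, hfac, Nat.factorial_succ]
    congr 1
    push_cast
    field_simp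
  have h2 : Polynomial.C ((n + 2).factorial : ℚ)⁻¹ * Polynomial.C ((n : ℚ) + 1) *
      Polynomial.C ((n : ℚ) + 2) = Polynomial.C (n.factorial : ℚ)⁻¹ := by
    rw [← Polynomial.C_mul, ← Polynomial.C_mul, hfac]
    congr 1
    field_simp
  rw [hcast]
  linear_combination cherryPoly (n + 1) * h1 + Polynomial.X * cherryPoly n * h2

theorem coeff_two_Y1gf_mul : coeff 2 Y1gf * 2 = Polynomial.X := by
  rw [coeff_Y1gf le_rfl, cherryPoly_two, mul_right_comm, ← Polynomial.C_ofNat,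
    ← Polynomial.C_mul]
  norm_num

theorem coeff_three_Y1gf_mul :
    coeff 3 Y1gf * 3 = Polynomial.C (1 / 2 : ℚ) * Polynomial.X ^ 2 + coeff 2 Y1gf := by
  rw [coeff_Y1gf (by norm_num), coeff_Y1gf le_rfl, cherryPoly_three, cherryPoly_two,
    mul_right_comm, ← Polynomial.C_ofNat, ← Polynomial.C_mul]
  norm_num [Nat.factorial]
  ring

/-- `dY_1/dz = xz + x²z²/2 + Y_1·(1 + xz)`, with `Y_1(0,x)=0`. -/
theorem Y1gf_ode :
    PowerSeries.constantCoeff (R := Polynomial ℚ) Y1gf = 0 ∧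
    Y1gf.derivativeFun =
      PowerSeries.C (R := Polynomial ℚ) Polynomial.X * PowerSeries.X +
        PowerSeries.C (R := Polynomial ℚ) (Polynomial.C (1 / 2 : ℚ) * Polynomial.X ^ 2) *
          PowerSeries.X ^ 2 +
        Y1gf * (1 + PowerSeries.C (R := Polynomial ℚ) Polynomial.X * PowerSeries.X) := by
  refine ⟨by rw [← coeff_zero_eq_constantCoeff_apply, coeff_Y1gf_of_lt_two two_pos], ?_⟩
  refine PowerSeries.ext fun n => ?_
  change coeff n (d⁄dX _ Y1gf) = _
  rw [PowerSeries.coeff_derivative,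
    show Y1gf * (1 + PowerSeries.C Polynomial.X * PowerSeries.X) =
      Y1gf + PowerSeries.C Polynomial.X * (PowerSeries.X * Y1gf) by ring]
  simp only [map_add, PowerSeries.coeff_C_mul, PowerSeries.coeff_X, PowerSeries.coeff_X_pow]
  rcases n with _ | _ | _ | n
  · simp [coeff_Y1gf_of_lt_two]
  · simpa [coeff_Y1gf_of_lt_two, one_add_one_eq_two] using coeff_two_Y1gf_mul
  · simpa [coeff_Y1gf_of_lt_two, two_add_one_eq_three] using coeff_three_Y1gf_mul
  · convert coeff_Y1gf_add_two (n := n + 2) (by omega) using 1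
    simp [PowerSeries.coeff_succ_X_mul]
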